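/- Let R be a real symmetric positive semidefinite N×N matrix, let θ : {1,…,N} → ℝ, Φ(θ) = diag(e^{iθ₁},…,e^{iθ_N}), and define t(θ) = tr(Φ(θ)ᴴ R Φ(θ) R), a nonnegative real number. Let M, K be finite index sets and b_{mk} ≥ 0, d_{mk} ≥ 0 for (m,k) ∈ M × K, and define NMSE_{mk}(θ) = 1 − b_{mk} t(θ) / (1 + d_{mk} t(θ)). Then the equal phase-shift design is optimal for problem of minimizing the total NMSE: for every θ : {1,…,N} → ℝ and every constant phase vector θ⁰ (with θ⁰_1 = … = θ⁰_N), Σ_{m∈M} Σ_{k∈K} NMSE_{mk}(θ⁰) ≤ Σ_{m∈M} Σ_{k∈K} NMSE_{mk}(θ). -/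

import Mathlib

open MeasureTheory ProbabilityTheory Matrix Complex
open scoped ComplexOrder

noncomputable section

variable {Ω : Type*} [MeasurableSpace Ω]

/-- `g` is a circularly symmetric complex Gaussian scalar `CN(0, σ²)`:
`g = X + i Y` with `X, Y` independent real Gaussians of mean `0` and variance `σ²/2`. -/
def IsCN (μ : Measure Ω) (σ2 : ℝ) (g : Ω → ℂ) : Prop :=
  ∃ X Y : Ω → ℝ, IndepFun X Y μ ∧
    μ.map X = gaussianReal 0 (σ2 / 2).toNNReal ∧
    μ.map Y = gaussianReal 0 (σ2 / 2).toNNReal ∧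
    ∀ ω, g ω = (X ω : ℂ) + (Y ω : ℂ) * Complex.I

/-- `w : Ω → ℂ^N` has mutually independent `CN(0,1)` entries. -/
def IsStdCNVec (μ : Measure Ω) {N : ℕ} (w : Ω → Fin N → ℂ) : Prop :=
  iIndepFun (fun i ω => w ω i) μ ∧
    ∀ i, IsCN μ 1 fun ω => w ω i

/-- The positive semidefinite square root, as `Matrix.PosSemidef.sqrt` was defined in the
older Mathlib (removed since). -/
def Matrix.PosSemidef.sqrt {n 𝕜 : Type*} [Fintype n] [RCLike 𝕜] [DecidableEq n]
    {A : Matrix n n 𝕜} (hA : A.PosSemidef) : Matrix n n 𝕜 :=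
  hA.1.eigenvectorUnitary.1 * diagonal ((↑) ∘ Real.sqrt ∘ hA.1.eigenvalues) *
    (star hA.1.eigenvectorUnitary : Matrix n n 𝕜)

/-- `h` is a `CN(0, S)` random vector: `h = S^{1/2} w` with `w` a standard complex
Gaussian vector, where `S^{1/2}` is the positive semidefinite square root of `S`. -/
def IsCNVec (μ : Measure Ω) {N : ℕ} {S : Matrix (Fin N) (Fin N) ℂ}
    (hS : S.PosSemidef) (h : Ω → Fin N → ℂ) : Prop :=
  ∃ w : Ω → Fin N → ℂ, IsStdCNVec μ w ∧ ∀ ω, h ω = hS.sqrt *ᵥ w ω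

/-- The RIS phase-shift matrix `Φ = diag (e^{iθ₁}, …, e^{iθ_N})`. -/
def phaseShift {N : ℕ} (θ : Fin N → ℝ) : Matrix (Fin N) (Fin N) ℂ :=
  Matrix.diagonal fun n => Complex.exp (θ n * Complex.I)
lemma Matrix.PosSemidef.sqrt_mul_self {n 𝕜 : Type*} [Fintype n] [RCLike 𝕜] [DecidableEq n]
    {A : Matrix n n 𝕜} (hA : A.PosSemidef) : hA.sqrt * hA.sqrt = A := by
  have hU : star (hA.1.eigenvectorUnitary : Matrix n n 𝕜) *
      (hA.1.eigenvectorUnitary : Matrix n n 𝕜) = 1 := by simp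
  have hs := hA.1.spectral_theorem
  rw [Unitary.conjStarAlgAut_apply] at hs
  refine Eq.trans ?_ hs.symm
  unfold Matrix.PosSemidef.sqrt
  simp only [Matrix.mul_assoc]
  rw [← Matrix.mul_assoc (star _) (hA.1.eigenvectorUnitary : Matrix n n 𝕜), hU, Matrix.one_mul,
    ← Matrix.mul_assoc (diagonal _), diagonal_mul_diagonal]
  congr 3
  funext i
  simp [← RCLike.ofReal_mul, Real.mul_self_sqrt (hA.eigenvalues_nonneg i)]

lemma Matrix.PosSemidef.posSemidef_sqrt {n 𝕜 : Type*} [Fintype n] [RCLike 𝕜] [DecidableEq n]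
    {A : Matrix n n 𝕜} (hA : A.PosSemidef) : hA.sqrt.PosSemidef := by
  have hD : (diagonal ((RCLike.ofReal : ℝ → 𝕜) ∘ Real.sqrt ∘ hA.1.eigenvalues)).PosSemidef := by
    rw [posSemidef_diagonal_iff]
    intro i
    simp [Real.sqrt_nonneg]
  have := hD.mul_mul_conjTranspose_same (hA.1.eigenvectorUnitary : Matrix n n 𝕜)
  unfold Matrix.PosSemidef.sqrt
  convert this using 2
  simp [Matrix.star_eq_conjTranspose]

attribute [local irreducible] Matrix.PosSemidef.sqrt

/-- The real part of `tr (Mᴴ M)` is nonnegative. -/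
lemma trace_conjTranspose_mul_self_re_nonneg {N : ℕ} (A : Matrix (Fin N) (Fin N) ℂ) :
    0 ≤ (Matrix.trace (Aᴴ * A)).re := by
  have : Matrix.trace (Aᴴ * A) = ∑ i, ∑ j, (starRingEnd ℂ) (A j i) * A j i := by
    simp [Matrix.trace, Matrix.diag, Matrix.mul_apply, Matrix.conjTranspose_apply]
  rw [this, Complex.re_sum]
  refine Finset.sum_nonneg fun i _ => ?_
  rw [Complex.re_sum]
  refine Finset.sum_nonneg fun j _ => ?_
  rw [← Complex.normSq_eq_conj_mul_self]
  simpa using Complex.normSq_nonneg (A j i)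

/-- The complexification of a real PSD matrix is PSD. -/
lemma posSemidef_map_ofReal {N : ℕ} {R : Matrix (Fin N) (Fin N) ℝ} (hR : R.PosSemidef) :
    (R.map Complex.ofReal).PosSemidef := by
  have h1 : R.map Complex.ofReal =
      (hR.sqrt.map Complex.ofReal)ᴴ * (hR.sqrt.map Complex.ofReal) := by
    have hs : hR.sqrt * hR.sqrt = R := hR.sqrt_mul_self
    have hherm : hR.sqrtᴴ = hR.sqrt := hR.posSemidef_sqrt.isHermitian
    calc R.map Complex.ofReal = (hR.sqrt * hR.sqrt).map Complex.ofReal := by rw [hs]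
      _ = hR.sqrt.map Complex.ofReal * hR.sqrt.map Complex.ofReal := by
          ext i j
          simp only [Matrix.map_apply, Matrix.mul_apply]
          push_cast
          rfl
      _ = (hR.sqrt.map Complex.ofReal)ᴴ * (hR.sqrt.map Complex.ofReal) := by
          congr 1
          ext i j
          have h2 : hR.sqrt j i = hR.sqrt i j := by
            have h3 := congrFun (congrFun hherm i) j
            simpa [Matrix.conjTranspose_apply] using h3
          simp [Matrix.conjTranspose_apply, Matrix.map_apply, Complex.conj_ofReal, h2]
  rw [h1]
  exact Matrix.posSemidef_conjTranspose_mul_self _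

/-- Optimality of the equal phase-shift design for the total-NMSE minimization
problem: with `t(θ) = tr(Φ(θ)ᴴ R Φ(θ) R)` (a nonnegative real) and
`NMSE_{mk}(θ) = 1 - b_{mk} t(θ)/(1 + d_{mk} t(θ))` for nonnegative coefficients
`b_{mk}, d_{mk}`, any constant phase vector `θ⁰` achieves a total NMSE no larger
than that of an arbitrary phase vector `θ`. -/
theorem equal_phase_shift_minimizes_total_nmse {N : ℕ}
    (R : Matrix (Fin N) (Fin N) ℝ) (hR : R.PosSemidef)
    {M K : Type*} [Fintype M] [Fintype K]
    (b d : M → K → ℝ) (hb : ∀ m k, 0 ≤ b m k) (hd : ∀ m k, 0 ≤ d m k)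
    (t : (Fin N → ℝ) → ℝ)
    (ht : ∀ θ : Fin N → ℝ, (↑(t θ) : ℂ) =
      Matrix.trace ((phaseShift θ)ᴴ * R.map Complex.ofReal * phaseShift θ *
        R.map Complex.ofReal))
    (θ θ0 : Fin N → ℝ) (hθ0 : ∀ n n' : Fin N, θ0 n = θ0 n') :
    ∑ m : M, ∑ k : K, (1 - b m k * t θ0 / (1 + d m k * t θ0)) ≤
      ∑ m : M, ∑ k : K, (1 - b m k * t θ / (1 + d m k * t θ)) := by
  set C : Matrix (Fin N) (Fin N) ℂ := R.map Complex.ofReal with hC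
  have hCpsd : C.PosSemidef := posSemidef_map_ofReal hR
  -- t is the real part of the trace
  have htre : ∀ θ' : Fin N → ℝ, t θ' =
      (Matrix.trace ((phaseShift θ')ᴴ * C * phaseShift θ' * C)).re := by
    intro θ'; rw [← ht θ', Complex.ofReal_re]
  -- explicit double-sum formula
  have hsum : ∀ θ' : Fin N → ℝ,
      Matrix.trace ((phaseShift θ')ᴴ * C * phaseShift θ' * C) =
      ∑ n : Fin N, ∑ n' : Fin N,
        (starRingEnd ℂ) (Complex.exp (θ' n * Complex.I)) * (R n n' : ℂ) *
          Complex.exp (θ' n' * Complex.I) * (R n' n : ℂ) := by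
    intro θ'
    simp only [Matrix.trace, Matrix.diag, Matrix.mul_apply, phaseShift,
      Matrix.diagonal_conjTranspose, Matrix.diagonal_apply, Matrix.map_apply, hC]
    simp [Finset.mul_sum, Finset.sum_mul, apply_ite, mul_assoc]
  -- nonnegativity of t θ
  have htnn : 0 ≤ t θ := by
    rw [htre θ]
    set T := hCpsd.sqrt with hT
    have hT2 : T * T = C := hCpsd.sqrt_mul_self
    have hTh : Tᴴ = T := hCpsd.posSemidef_sqrt.isHermitian
    have hkey : Matrix.trace ((phaseShift θ)ᴴ * C * phaseShift θ * C) =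
        Matrix.trace ((T * phaseShift θ * T)ᴴ * (T * phaseShift θ * T)) := by
      rw [← hT2]
      rw [show (phaseShift θ)ᴴ * (T * T) * phaseShift θ * (T * T)
          = ((phaseShift θ)ᴴ * (T * T) * phaseShift θ * T) * T by
        simp only [Matrix.mul_assoc]]
      rw [Matrix.trace_mul_comm]
      congr 1
      simp only [Matrix.conjTranspose_mul, hTh, Matrix.mul_assoc]
    rw [hkey]
    exact trace_conjTranspose_mul_self_re_nonneg _
  -- t θ ≤ t θ0
  have htle : t θ ≤ t θ0 := by
    rw [htre θ, htre θ0, hsum θ, hsum θ0, Complex.re_sum, Complex.re_sum]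
    refine Finset.sum_le_sum fun n _ => ?_
    rw [Complex.re_sum, Complex.re_sum]
    refine Finset.sum_le_sum fun n' _ => ?_
    have hRsym : R n' n = R n n' := congrFun (congrFun hR.isHermitian n) n'
    have hsq : (0:ℝ) ≤ R n n' * R n' n := by rw [hRsym]; exact mul_self_nonneg _
    -- θ0 term
    have h0 : ((starRingEnd ℂ) (Complex.exp (θ0 n * Complex.I)) * (R n n' : ℂ) *
        Complex.exp (θ0 n' * Complex.I) * (R n' n : ℂ)).re = R n n' * R n' n := by
      rw [hθ0 n' n]
      have : (starRingEnd ℂ) (Complex.exp (θ0 n * Complex.I)) * (R n n' : ℂ) *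
          Complex.exp (θ0 n * Complex.I) * (R n' n : ℂ)
          = ((starRingEnd ℂ) (Complex.exp (θ0 n * Complex.I)) *
              Complex.exp (θ0 n * Complex.I)) * ((R n n' : ℂ) * (R n' n : ℂ)) := by ring
      have hone : (starRingEnd ℂ) (Complex.exp (θ0 n * Complex.I)) *
          Complex.exp (θ0 n * Complex.I) = 1 := by
        rw [← Complex.exp_conj, ← Complex.exp_add]
        simp
      rw [this, hone, one_mul]
      simp [← Complex.ofReal_mul]
    rw [h0]
    -- θ term
    have hθterm : ((starRingEnd ℂ) (Complex.exp (θ n * Complex.I)) * (R n n' : ℂ) *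
        Complex.exp (θ n' * Complex.I) * (R n' n : ℂ)).re
        = R n n' * R n' n * Real.cos (θ n' - θ n) := by
      have he : (starRingEnd ℂ) (Complex.exp (θ n * Complex.I)) *
          Complex.exp (θ n' * Complex.I) = Complex.exp ((↑(θ n' - θ n)) * Complex.I) := by
        rw [← Complex.exp_conj]
        rw [← Complex.exp_add]
        congr 1
        simp [Complex.ofReal_sub]
        ring
      have : (starRingEnd ℂ) (Complex.exp (θ n * Complex.I)) * (R n n' : ℂ) *
          Complex.exp (θ n' * Complex.I) * (R n' n : ℂ)
          = ((R n n' : ℂ) * (R n' n : ℂ)) *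
            ((starRingEnd ℂ) (Complex.exp (θ n * Complex.I)) *
              Complex.exp (θ n' * Complex.I)) := by ring
      rw [this, he]
      rw [show ((R n n' : ℂ) * (R n' n : ℂ)) = ((R n n' * R n' n : ℝ) : ℂ) by push_cast; ring]
      rw [Complex.re_ofReal_mul, Complex.exp_ofReal_mul_I_re]
    rw [hθterm]
    calc R n n' * R n' n * Real.cos (θ n' - θ n)
        ≤ R n n' * R n' n * 1 := by
          exact mul_le_mul_of_nonneg_left (Real.cos_le_one _) hsq
      _ = R n n' * R n' n := mul_one _
  have ht0nn : 0 ≤ t θ0 := le_trans htnn htle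
  -- conclude per-term
  refine Finset.sum_le_sum fun m _ => Finset.sum_le_sum fun k _ => ?_
  have hbm := hb m k
  have hdm := hd m k
  have hden : 0 < 1 + d m k * t θ := by positivity
  have hden0 : 0 < 1 + d m k * t θ0 := by positivity
  have hfrac : b m k * t θ / (1 + d m k * t θ) ≤ b m k * t θ0 / (1 + d m k * t θ0) := by
    rw [div_le_div_iff₀ hden hden0]
    nlinarith [mul_nonneg hbm (mul_nonneg hdm htnn)]
  linarith
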